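/- Let m be an odd positive integer, A, B ∈ 𝒯 with B ≠ 0, and d ∈ 𝔽_q. The number of triples (X,Y,Z) ∈ 𝒯³ satisfying X + Y + Z = −A + 2B in R and x³ + y³ + z³ = a³ + b³·d in 𝔽_q equals: 3 if d = 0; 0 if d ∈ M_0 ∪ M_1; and 6 if d ∈ M_3. -/

import Mathlib

open Polynomial

/-- The residue field `𝔽_q = R/2R` of the Galois ring `R = (ℤ/4ℤ)[x]/(f)`. -/
abbrev ResField (f : Polynomial (ZMod 4)) : Type :=
  AdjoinRoot f ⧸ (Ideal.span {2} : Ideal (AdjoinRoot f))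

/-- Reduction modulo 2, `μ : R → R/2R`. -/
noncomputable def muRed (f : Polynomial (ZMod 4)) : AdjoinRoot f →+* ResField f :=
  Ideal.Quotient.mk _

/-- The number of roots of `z³ + z + d` in `𝔽_q`. -/
noncomputable def cubicRoots (f : Polynomial (ZMod 4)) (d : ResField f) : ℕ :=
  Nat.card {z : ResField f // z ^ 3 + z + d = 0}

/-!
Write `T` for the Teichmüller lift. For Teichmüller `X, Y` one has
`X + Y = T(x + y) + 2 T(√(xy))` (expand `(X + Y) ^ 2 ^ m` modulo `4`), hence
`X + Y + Z = T(x + y + z) + 2 T(√(xy + yz + zx))`. As `-A + 2B = A + 2(A + B)` and reduction is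
injective on `𝒯` and on `2R`, the equation in `R` says exactly `x + y + z = a` and
`xy + yz + zx = (a + b)²`; the cubic equation then fixes `xyz`. Substituting `x = a + b u`, the
triple `(u, v, w)` has the elementary symmetric functions of the roots of `z³ + z + d`. For
`d = 0` these are `0, 1, 1`, giving `3` orderings; for `d ≠ 0` the roots must be distinct, so
there are `3! = 6` solutions when `N(d) = 3` and none otherwise.
-/

section FourEqZero

variable {R : Type*} [CommRing R]

theorem add_two_mul_pow_two_pow (h4 : (4 : R) = 0) {m : ℕ} (hm : 0 < m) (u s : R) :
    (u + 2 * s) ^ 2 ^ m = u ^ 2 ^ m := by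
  obtain ⟨k, rfl⟩ := Nat.exists_eq_add_one_of_ne_zero hm.ne'
  have hsq : (u + 2 * s) ^ 2 = u ^ 2 := by linear_combination (u * s + s ^ 2) * h4
  rw [pow_succ', pow_mul, pow_mul, hsq]

theorem add_pow_two_pow_succ (h4 : (4 : R) = 0) (x y : R) (k : ℕ) :
    (x + y) ^ 2 ^ (k + 1) = x ^ 2 ^ (k + 1) + y ^ 2 ^ (k + 1) + 2 * (x * y) ^ 2 ^ k := by
  induction k with
  | zero => ring
  | succ k ih =>
    rw [pow_succ 2 (k + 1), pow_mul, pow_mul, pow_mul, ih, mul_pow x y (2 ^ (k + 1))]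
    linear_combination
      ((x * y) ^ 2 ^ k * (x ^ 2 ^ (k + 1) + y ^ 2 ^ (k + 1)) + ((x * y) ^ 2 ^ k) ^ 2) * h4

theorem add_eq_pow_two_pow_add_two_mul (h4 : (4 : R) = 0) {m : ℕ} (hm : 0 < m) {x y : R}
    (hx : x ^ 2 ^ m = x) (hy : y ^ 2 ^ m = y) :
    x + y = (x + y) ^ 2 ^ m + 2 * (x * y) ^ 2 ^ (m - 1) := by
  obtain ⟨k, rfl⟩ := Nat.exists_eq_add_one_of_ne_zero hm.ne'
  rw [add_pow_two_pow_succ h4, hx, hy, Nat.add_sub_cancel]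
  linear_combination -(x * y) ^ 2 ^ k * h4

end FourEqZero

theorem sq_injective_of_forall_pow_two_pow_eq {M : Type*} [Monoid M] {m : ℕ} (hm : 0 < m)
    (hM : ∀ x : M, x ^ 2 ^ m = x) : Function.Injective fun x : M => x ^ 2 := by
  intro x y (h : x ^ 2 = y ^ 2)
  obtain ⟨k, rfl⟩ := Nat.exists_eq_add_one_of_ne_zero hm.ne'
  rw [← hM x, ← hM y, pow_succ', pow_mul, pow_mul, h]

section Reduction

variable {R K : Type*} [CommRing R] [CommRing K] {μ : R →+* K} {m : ℕ}

theorem two_eq_zero_of_ker_eq_span_two (hker : RingHom.ker μ = Ideal.span {2}) : (2 : K) = 0 := by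
  rw [← map_ofNat μ 2, ← RingHom.mem_ker, hker]
  exact Ideal.mem_span_singleton_self 2

theorem exists_eq_add_two_mul_of_map_eq (hker : RingHom.ker μ = Ideal.span {2}) {u v : R}
    (h : μ u = μ v) : ∃ s, v = u + 2 * s := by
  have hmem : v - u ∈ Ideal.span {(2 : R)} := by rw [← hker, RingHom.mem_ker, map_sub, h, sub_self]
  obtain ⟨s, hs⟩ := Ideal.mem_span_singleton.1 hmem
  exact ⟨s, by linear_combination hs⟩

theorem two_mul_eq_two_mul_of_map_eq (h4 : (4 : R) = 0) (hker : RingHom.ker μ = Ideal.span {2})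
    {u v : R} (h : μ u = μ v) : 2 * u = 2 * v := by
  obtain ⟨s, rfl⟩ := exists_eq_add_two_mul_of_map_eq hker h
  linear_combination -s * h4

theorem pow_two_pow_eq_of_map_eq (h4 : (4 : R) = 0) (hker : RingHom.ker μ = Ideal.span {2})
    (hm : 0 < m) {u v : R} (h : μ u = μ v) : u ^ 2 ^ m = v ^ 2 ^ m := by
  obtain ⟨s, rfl⟩ := exists_eq_add_two_mul_of_map_eq hker h
  exact (add_two_mul_pow_two_pow h4 hm u s).symm

variable (h4 : (4 : R) = 0) (hker : RingHom.ker μ = Ideal.span {2}) (hm : 0 < m)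
  (hK : ∀ x : K, x ^ 2 ^ m = x)
include h4 hker hm hK

theorem pow_two_pow_pow_two_pow (u : R) : (u ^ 2 ^ m) ^ 2 ^ m = u ^ 2 ^ m :=
  pow_two_pow_eq_of_map_eq h4 hker hm (by rw [map_pow, hK])

theorem add_add_eq_pow_two_pow_add_two_mul {x y z : R} (hx : x ^ 2 ^ m = x) (hy : y ^ 2 ^ m = y)
    (hz : z ^ 2 ^ m = z) :
    x + y + z = (x + y + z) ^ 2 ^ m +
      2 * (((x + y) ^ 2 ^ m * z) ^ 2 ^ (m - 1) + (x * y) ^ 2 ^ (m - 1)) := by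
  have hxy := add_eq_pow_two_pow_add_two_mul h4 hm hx hy
  have hxyz :=
    add_eq_pow_two_pow_add_two_mul h4 hm (pow_two_pow_pow_two_pow h4 hker hm hK (x + y)) hz
  have hlift : ((x + y) ^ 2 ^ m + z) ^ 2 ^ m = (x + y + z) ^ 2 ^ m :=
    pow_two_pow_eq_of_map_eq h4 hker hm (by simp only [map_add, map_pow, hK])
  linear_combination hxy + hxyz + hlift

theorem add_add_eq_add_two_mul_iff (hann : ∀ r, 2 * r = 0 → μ r = 0) {x y z a : R}
    (hx : x ^ 2 ^ m = x) (hy : y ^ 2 ^ m = y) (hz : z ^ 2 ^ m = z) (ha : a ^ 2 ^ m = a) (c : R) :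
    x + y + z = a + 2 * c ↔
      μ x + μ y + μ z = μ a ∧ μ x * μ y + μ y * μ z + μ z * μ x = μ c ^ 2 := by
  set w := ((x + y) ^ 2 ^ m * z) ^ 2 ^ (m - 1) + (x * y) ^ 2 ^ (m - 1)
  have h2 := two_eq_zero_of_ker_eq_span_two hker
  have hw : μ w ^ 2 = μ x * μ y + μ y * μ z + μ z * μ x := by
    have hsqrt (p : K) : (p ^ 2 ^ (m - 1)) ^ 2 = p := by
      rw [← pow_mul, ← pow_succ, Nat.sub_add_cancel hm, hK]
    simp only [w, map_add, map_mul, map_pow, hK]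
    linear_combination hsqrt ((μ x + μ y) * μ z) + hsqrt (μ x * μ y) +
      ((μ x + μ y) * μ z) ^ 2 ^ (m - 1) * (μ x * μ y) ^ 2 ^ (m - 1) * h2
  rw [add_add_eq_pow_two_pow_add_two_mul h4 hker hm hK hx hy hz]
  constructor
  · intro h
    have hsum : μ (x + y + z) = μ a := by
      simpa only [map_add, map_mul, map_pow, hK, map_ofNat, h2, zero_mul, add_zero] using
        congrArg μ h
    have hlead : (x + y + z) ^ 2 ^ m = a := by rw [pow_two_pow_eq_of_map_eq h4 hker hm hsum, ha]
    have hwc : μ w = μ c := by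
      rw [← sub_eq_zero, ← map_sub]
      exact hann _ (by linear_combination h - hlead)
    simp only [map_add] at hsum
    exact ⟨hsum, by rw [← hw, hwc]⟩
  · rintro ⟨hsum, hsigma⟩
    have hlead : (x + y + z) ^ 2 ^ m = a := by
      have hsum' : μ (x + y + z) = μ a := by rw [map_add, map_add, hsum]
      rw [pow_two_pow_eq_of_map_eq h4 hker hm hsum', ha]
    have hwc : μ w = μ c := sq_injective_of_forall_pow_two_pow_eq hm hK (by simp only [hw, hsigma])
    rw [hlead, two_mul_eq_two_mul_of_map_eq h4 hker hwc]

theorem card_teichmuller_triples (hsurj : Function.Surjective μ) (P : R × R × R → Prop)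
    (Q : K × K × K → Prop) (hPQ : ∀ x y z : R, x ^ 2 ^ m = x → y ^ 2 ^ m = y → z ^ 2 ^ m = z →
      (P (x, y, z) ↔ Q (μ x, μ y, μ z))) :
    Nat.card {t : R × R × R //
        (t.1 ^ 2 ^ m = t.1 ∧ t.2.1 ^ 2 ^ m = t.2.1 ∧ t.2.2 ^ 2 ^ m = t.2.2) ∧ P t} =
      Nat.card {s : K × K × K // Q s} := by
  let lift (y : K) : R := Function.surjInv hsurj y ^ 2 ^ m
  have lift_pow (y : K) : lift y ^ 2 ^ m = lift y := pow_two_pow_pow_two_pow h4 hker hm hK _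
  have map_lift (y : K) : μ (lift y) = y := by
    simp only [lift, map_pow, hK, Function.surjInv_eq hsurj]
  have lift_map {x : R} (hx : x ^ 2 ^ m = x) : lift (μ x) = x :=
    (pow_two_pow_eq_of_map_eq h4 hker hm (Function.surjInv_eq hsurj _)).trans hx
  exact Nat.card_congr
    { toFun := fun t => ⟨(μ t.1.1, μ t.1.2.1, μ t.1.2.2),
        (hPQ _ _ _ t.2.1.1 t.2.1.2.1 t.2.1.2.2).1 t.2.2⟩
      invFun := fun s => ⟨(lift s.1.1, lift s.1.2.1, lift s.1.2.2),
        ⟨lift_pow _, lift_pow _, lift_pow _⟩,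
        (hPQ _ _ _ (lift_pow _) (lift_pow _) (lift_pow _)).2 (by simpa only [map_lift] using s.2)⟩
      left_inv := fun ⟨⟨x, y, z⟩, ⟨hx, hy, hz⟩, _⟩ => by
        simp only [lift_map hx, lift_map hy, lift_map hz]
      right_inv := fun ⟨⟨x, y, z⟩, _⟩ => by simp only [map_lift] }

end Reduction

theorem card_pairwise_ne_triples {α : Type*} (h : Nat.card α = 3) :
    Nat.card {p : α × α × α // p.1 ≠ p.2.1 ∧ p.1 ≠ p.2.2 ∧ p.2.1 ≠ p.2.2} = 6 := by
  have : Finite α := Nat.finite_of_card_ne_zero (by omega)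
  let e : α ≃ Fin 3 := (Finite.equivFin α).trans (finCongr h)
  rw [Nat.card_congr (Equiv.subtypeEquiv (e.prodCongr (e.prodCongr e))
    (q := fun p => p.1 ≠ p.2.1 ∧ p.1 ≠ p.2.2 ∧ p.2.1 ≠ p.2.2) fun p => by
      simp only [Equiv.prodCongr_apply, Prod.map, e.injective.ne_iff]), Nat.card_eq_fintype_card]
  decide

section CharTwoField

variable {F : Type*} [Field F]

/-- In characteristic `2` this says `(z - u) (z - v) (z - w) = z ^ 3 + z + d`. -/
def IsCubicRootTriple (d u v w : F) : Prop :=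
  u + v + w = 0 ∧ u * v + v * w + w * u = 1 ∧ u * v * w = d

variable (h2 : (2 : F) = 0)
include h2

theorem IsCubicRootTriple.cubic_eq_zero {d u v w : F} (h : IsCubicRootTriple d u v w) :
    u ^ 3 + u + d = 0 ∧ v ^ 3 + v + d = 0 ∧ w ^ 3 + w + d = 0 := by
  obtain ⟨hs, he, hp⟩ := h
  exact ⟨by linear_combination u ^ 2 * hs - u * he + hp + d * h2,
    by linear_combination v ^ 2 * hs - v * he + hp + d * h2,
    by linear_combination w ^ 2 * hs - w * he + hp + d * h2⟩

theorem IsCubicRootTriple.pairwise_ne {d u v w : F} (hd : d ≠ 0) (h : IsCubicRootTriple d u v w) :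
    u ≠ v ∧ u ≠ w ∧ v ≠ w := by
  obtain ⟨hs, -, hp⟩ := h
  refine ⟨fun huv => hd ?_, fun huw => hd ?_, fun hvw => hd ?_⟩
  · have hw : w = 0 := by linear_combination hs + huv - u * h2
    rw [← hp, hw, mul_zero]
  · have hv : v = 0 := by linear_combination hs + huw - u * h2
    rw [← hp, hv, mul_zero, zero_mul]
  · have hu : u = 0 := by linear_combination hs + hvw - v * h2
    rw [← hp, hu, zero_mul, zero_mul]

theorem isCubicRootTriple_of_pairwise_ne {d u v w : F} (hu : u ^ 3 + u + d = 0)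
    (hv : v ^ 3 + v + d = 0) (hw : w ^ 3 + w + d = 0) (huv : u ≠ v) (huw : u ≠ w) (hvw : v ≠ w) :
    IsCubicRootTriple d u v w := by
  have hquad {s t : F} (hs : s ^ 3 + s + d = 0) (ht : t ^ 3 + t + d = 0) (hst : s ≠ t) :
      s ^ 2 + s * t + t ^ 2 = 1 := by
    have hfac : (s - t) * (s ^ 2 + s * t + t ^ 2 - 1) = 0 := by
      linear_combination hs - ht + (t - s) * h2
    linear_combination (mul_eq_zero.1 hfac).resolve_left (sub_ne_zero.2 hst)
  have quv := hquad hu hv huv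
  have quw := hquad hu hw huw
  have hs : u + v + w = 0 := by
    have hfac : (v - w) * (u + v + w) = 0 := by linear_combination quv - quw
    exact (mul_eq_zero.1 hfac).resolve_left (sub_ne_zero.2 hvw)
  exact ⟨hs, by linear_combination (u + v) * hs - quv - h2,
    by linear_combination u * v * hs - u * quv + hu - (u + d) * h2⟩

theorem isCubicRootTriple_iff_affine {a b : F} (hb : b ≠ 0) (d u v w : F) :
    IsCubicRootTriple d u v w ↔
      (a + b * u) + (a + b * v) + (a + b * w) = a ∧
      (a + b * u) * (a + b * v) + (a + b * v) * (a + b * w) + (a + b * w) * (a + b * u) =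
        (a + b) ^ 2 ∧
      (a + b * u) ^ 3 + (a + b * v) ^ 3 + (a + b * w) ^ 3 = a ^ 3 + b ^ 3 * d := by
  -- with `sᵢ` the elementary symmetric functions of `u, v, w`, the coefficients come from
  -- `Σ (a + b u)³ = 3a³ + 3a²b s₁ + 3ab² (s₁² - 2s₂) + b³ (s₁³ - 3s₁s₂ + 3s₃)`
  constructor
  · rintro ⟨hs, he, hp⟩
    refine ⟨by linear_combination b * hs + a * h2,
      by linear_combination b ^ 2 * he + 2 * a * b * hs + (a ^ 2 - a * b) * h2,
      by linear_combination (3 * a ^ 2 * b + 3 * a * b ^ 2 * (u + v + w) + b ^ 3 * (u + v + w) ^ 2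
          - 3 * b ^ 3 * (u * v + v * w + w * u)) * hs - 6 * a * b ^ 2 * he + 3 * b ^ 3 * hp
          + (a ^ 3 - 3 * a * b ^ 2 + b ^ 3 * d) * h2⟩
  · rintro ⟨H1, H2, H3⟩
    have hs : u + v + w = 0 := by
      have hbs : b * (u + v + w) = 0 := by linear_combination H1 - a * h2
      exact (mul_eq_zero.1 hbs).resolve_left hb
    have he : u * v + v * w + w * u = 1 := by
      have hbe : b ^ 2 * (u * v + v * w + w * u - 1) = 0 := by
        linear_combination H2 - 2 * a * b * hs - (a ^ 2 - a * b) * h2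
      linear_combination (mul_eq_zero.1 hbe).resolve_left (pow_ne_zero 2 hb)
    have hbp : b ^ 3 * (u * v * w - d) = 0 := by
      linear_combination H3 - (3 * a ^ 2 * b + 3 * a * b ^ 2 * (u + v + w) + b ^ 3 * (u + v + w) ^ 2
        - 3 * b ^ 3 * (u * v + v * w + w * u)) * hs + 6 * a * b ^ 2 * he
        - (a ^ 3 - 3 * a * b ^ 2 + b ^ 3 * u * v * w) * h2
    exact ⟨hs, he, by linear_combination (mul_eq_zero.1 hbp).resolve_left (pow_ne_zero 3 hb)⟩

theorem card_affine_triples_eq {a b : F} (hb : b ≠ 0) (d : F) :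
    Nat.card {s : F × F × F // s.1 + s.2.1 + s.2.2 = a ∧
      s.1 * s.2.1 + s.2.1 * s.2.2 + s.2.2 * s.1 = (a + b) ^ 2 ∧
      s.1 ^ 3 + s.2.1 ^ 3 + s.2.2 ^ 3 = a ^ 3 + b ^ 3 * d} =
    Nat.card {t : F × F × F // IsCubicRootTriple d t.1 t.2.1 t.2.2} := by
  let e : F ≃ F := (Equiv.mulLeft₀ b hb).trans (Equiv.addLeft a)
  exact (Nat.card_congr (Equiv.subtypeEquiv (e.prodCongr (e.prodCongr e))
    fun t => isCubicRootTriple_iff_affine h2 hb d t.1 t.2.1 t.2.2)).symm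

theorem card_isCubicRootTriple_zero :
    Nat.card {t : F × F × F // IsCubicRootTriple 0 t.1 t.2.1 t.2.2} = 3 := by
  have hroot {z : F} (hz : z ^ 3 + z + 0 = 0) : z = 0 ∨ z = 1 := by
    have hfac : z * (z + 1) ^ 2 = 0 := by linear_combination hz + z ^ 2 * h2
    rcases mul_eq_zero.1 hfac with h0 | h1
    · exact Or.inl h0
    · exact Or.inr (by linear_combination (pow_eq_zero_iff two_ne_zero).1 h1 - h2)
  have hset : {t : F × F × F | IsCubicRootTriple 0 t.1 t.2.1 t.2.2} =
      {(0, 1, 1), (1, 0, 1), (1, 1, 0)} := by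
    ext ⟨u, v, w⟩
    constructor
    · intro h
      obtain ⟨hu, hv, hw⟩ := h.cubic_eq_zero h2
      rcases hroot hu with rfl | rfl <;> rcases hroot hv with rfl | rfl <;>
        rcases hroot hw with rfl | rfl <;> simp_all [IsCubicRootTriple]
    · rintro (h | h | h) <;> simp_all [IsCubicRootTriple, one_add_one_eq_two]
  change Nat.card {t : F × F × F | IsCubicRootTriple 0 t.1 t.2.1 t.2.2} = 3
  rw [hset, Nat.card_coe_set_eq, Set.ncard_eq_three]
  exact ⟨_, _, _, by simp, by simp, by simp, rfl⟩

theorem card_isCubicRootTriple_eq_zero [Finite F] {d : F} (hd : d ≠ 0)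
    (hN : Nat.card {z : F // z ^ 3 + z + d = 0} ≤ 1) :
    Nat.card {t : F × F × F // IsCubicRootTriple d t.1 t.2.1 t.2.2} = 0 := by
  have : Subsingleton {z : F // z ^ 3 + z + d = 0} := Finite.card_le_one_iff_subsingleton.1 hN
  have : IsEmpty {t : F × F × F // IsCubicRootTriple d t.1 t.2.1 t.2.2} := by
    refine ⟨fun ⟨⟨u, v, w⟩, h⟩ => (h.pairwise_ne h2 hd).1 ?_⟩
    obtain ⟨hu, hv, -⟩ := h.cubic_eq_zero h2
    exact congrArg Subtype.val (Subsingleton.elim (⟨u, hu⟩ : {z : F // z ^ 3 + z + d = 0}) ⟨v, hv⟩)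
  exact Nat.card_of_isEmpty

theorem card_isCubicRootTriple_eq_six {d : F} (hd : d ≠ 0)
    (hN : Nat.card {z : F // z ^ 3 + z + d = 0} = 3) :
    Nat.card {t : F × F × F // IsCubicRootTriple d t.1 t.2.1 t.2.2} = 6 := by
  rw [← card_pairwise_ne_triples hN]
  refine Nat.card_congr
    { toFun := fun t =>
        have hroots := t.2.cubic_eq_zero h2
        have hne := t.2.pairwise_ne h2 hd
        ⟨(⟨_, hroots.1⟩, ⟨_, hroots.2.1⟩, ⟨_, hroots.2.2⟩),
          fun h => hne.1 (congrArg Subtype.val h), fun h => hne.2.1 (congrArg Subtype.val h),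
          fun h => hne.2.2 (congrArg Subtype.val h)⟩
      invFun := fun p =>
        ⟨(p.1.1.1, p.1.2.1.1, p.1.2.2.1), isCubicRootTriple_of_pairwise_ne h2 p.1.1.2 p.1.2.1.2
          p.1.2.2.2 (fun h => p.2.1 (Subtype.ext h)) (fun h => p.2.2.1 (Subtype.ext h))
          (fun h => p.2.2.2 (Subtype.ext h))⟩
      left_inv := fun _ => rfl
      right_inv := fun _ => rfl }

end CharTwoField

theorem card_teichmuller_solutions_eq {R K : Type*} [CommRing R] [Field K] {μ : R →+* K} {m : ℕ}
    (h4 : (4 : R) = 0) (hker : RingHom.ker μ = Ideal.span {2}) (hm : 0 < m)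
    (hK : ∀ x : K, x ^ 2 ^ m = x) (hann : ∀ r, 2 * r = 0 → μ r = 0)
    (hsurj : Function.Surjective μ) {a b : R} (ha : a ^ 2 ^ m = a) (hb : μ b ≠ 0) (d : K) :
    Nat.card {t : R × R × R //
        (t.1 ^ 2 ^ m = t.1 ∧ t.2.1 ^ 2 ^ m = t.2.1 ∧ t.2.2 ^ 2 ^ m = t.2.2) ∧
        t.1 + t.2.1 + t.2.2 = -a + 2 * b ∧
        μ t.1 ^ 3 + μ t.2.1 ^ 3 + μ t.2.2 ^ 3 = μ a ^ 3 + μ b ^ 3 * d} =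
      Nat.card {t : K × K × K // IsCubicRootTriple d t.1 t.2.1 t.2.2} := by
  have hrhs : -a + 2 * b = a + 2 * (a + b) := by linear_combination -a * h4
  rw [card_teichmuller_triples h4 hker hm hK hsurj _ fun s : K × K × K =>
      s.1 + s.2.1 + s.2.2 = μ a ∧ s.1 * s.2.1 + s.2.1 * s.2.2 + s.2.2 * s.1 = (μ a + μ b) ^ 2 ∧
        s.1 ^ 3 + s.2.1 ^ 3 + s.2.2 ^ 3 = μ a ^ 3 + μ b ^ 3 * d,
    card_affine_triples_eq (two_eq_zero_of_ker_eq_span_two hker) hb]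
  intro x y z hx hy hz
  rw [hrhs, add_add_eq_add_two_mul_iff h4 hker hm hK hann hx hy hz ha, map_add, and_assoc]

section GaloisRing

noncomputable abbrev mapModTwo (f : Polynomial (ZMod 4)) : Polynomial (ZMod 2) :=
  f.map (ZMod.castHom (show (2 : ℕ) ∣ 4 by norm_num) (ZMod 2))

theorem ker_castHom_four_two :
    RingHom.ker (ZMod.castHom (show (2 : ℕ) ∣ 4 by norm_num) (ZMod 2)) = Ideal.span {2} := by
  ext x
  rw [RingHom.mem_ker, Ideal.mem_span_singleton]
  constructor
  · intro hx
    obtain rfl | rfl : x = 0 ∨ x = 2 := by revert x hx; decide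
    exacts [dvd_zero 2, dvd_refl 2]
  · rintro ⟨c, rfl⟩
    rw [map_mul]
    revert c
    decide

noncomputable def zmodFourQuotientTwoEquiv : ZMod 4 ⧸ Ideal.span {(2 : ZMod 4)} ≃+* ZMod 2 :=
  (Ideal.quotEquivOfEq ker_castHom_four_two.symm).trans
    (RingHom.quotientKerEquivOfSurjective (ZMod.castHom_surjective _))

noncomputable def resFieldEquiv (f : Polynomial (ZMod 4)) :
    ResField f ≃+* AdjoinRoot (mapModTwo f) :=
  (Ideal.quotEquivOfEq (show Ideal.span {(2 : AdjoinRoot f)} =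
      (Ideal.span {(2 : ZMod 4)}).map (AdjoinRoot.of f) by
    rw [Ideal.map_span, Set.image_singleton, map_ofNat])).trans <|
    (AdjoinRoot.quotAdjoinRootEquivQuotPolynomialQuot (Ideal.span {2}) f).trans <|
      Ideal.quotientEquiv _ _ (Polynomial.mapEquiv zmodFourQuotientTwoEquiv) (by
        rw [Ideal.map_span, Set.image_singleton]
        congr 2
        refine ((Polynomial.map_map _ _ f).trans ?_).symm
        congr 1)

variable {f : Polynomial (ZMod 4)}

/-- `R` is free over `ℤ/4` with the power basis, and `2 c = 0` forces `c ∈ {0, 2}` in `ℤ/4`. -/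
theorem muRed_eq_zero_of_two_mul_eq_zero (hf : f.Monic) {r : AdjoinRoot f} (hr : 2 * r = 0) :
    muRed f r = 0 := by
  let b := (AdjoinRoot.powerBasis' hf).basis
  have hcoord (i) : 2 * b.repr r i = 0 := by
    have h2r : (2 : ZMod 4) • r = 2 * r := by rw [Algebra.smul_def, map_ofNat]
    simpa [h2r, hr, eq_comm] using congrArg (· i) (b.repr.map_smul (2 : ZMod 4) r)
  have hhalf : ∀ c : ZMod 4, 2 * c = 0 → c = 2 * ((c.val / 2 : ℕ) : ZMod 4) := by decide
  refine Ideal.Quotient.eq_zero_iff_mem.2 (Ideal.mem_span_singleton'.2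
    ⟨∑ i, (((b.repr r i).val / 2 : ℕ) : ZMod 4) • b i, ?_⟩)
  conv_rhs => rw [← b.sum_repr r]
  rw [Finset.sum_mul]
  refine Finset.sum_congr rfl fun i _ => ?_
  conv_rhs => rw [hhalf _ (hcoord i)]
  simp only [Algebra.smul_def, map_mul, map_ofNat]
  ring

theorem isField_resField (hirr : Irreducible (mapModTwo f)) : IsField (ResField f) :=
  have := Fact.mk hirr
  MulEquiv.isField (Field.toIsField _) (resFieldEquiv f).toMulEquiv

theorem resField_pow_two_pow_natDegree (hf : f.Monic) (hirr : Irreducible (mapModTwo f))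
    (x : ResField f) : x ^ 2 ^ f.natDegree = x := by
  have := Fact.mk hirr
  let pb := AdjoinRoot.powerBasis' (hf.map (ZMod.castHom (show (2 : ℕ) ∣ 4 by norm_num) (ZMod 2)))
  let _ : Fintype (AdjoinRoot (mapModTwo f)) := Module.fintypeOfFintype pb.basis
  have hcard : Fintype.card (AdjoinRoot (mapModTwo f)) = 2 ^ f.natDegree := by
    rw [Module.card_fintype pb.basis, ZMod.card, Fintype.card_fin, AdjoinRoot.powerBasis'_dim,
      hf.natDegree_map]
  apply (resFieldEquiv f).injective
  rw [map_pow, ← hcard, FiniteField.pow_card]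

theorem finite_resField (hf : f.Monic) : Finite (ResField f) :=
  have := hf.finite_adjoinRoot
  have : Finite (AdjoinRoot f) := Module.finite_of_finite (ZMod 4)
  Finite.of_surjective (muRed f) Ideal.Quotient.mk_surjective

end GaloisRing

/-- For `A, B ∈ 𝒯` with `B ≠ 0` and `d ∈ 𝔽_q`, the number of triples
`(X,Y,Z) ∈ 𝒯³` with `X + Y + Z = -A + 2B` in `R` and `x³ + y³ + z³ = a³ + b³·d` in `𝔽_q`
equals `3` if `d = 0`, `0` if `d ∈ M₀ ∪ M₁`, and `6` if `d ∈ M₃`. -/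
theorem statement14 (m : ℕ) (hmpos : 0 < m)
    (f : Polynomial (ZMod 4)) (hmonic : f.Monic) (hdeg : f.natDegree = m)
    (hirr : Irreducible (f.map (ZMod.castHom (show (2:ℕ) ∣ 4 by norm_num) (ZMod 2))))
    (A B : AdjoinRoot f) (hA : A ^ 2 ^ m = A) (hB : B ^ 2 ^ m = B) (hB0 : B ≠ 0)
    (d : ResField f) :
    (d = 0 →
      Nat.card {t : AdjoinRoot f × AdjoinRoot f × AdjoinRoot f //
        (t.1 ^ 2 ^ m = t.1 ∧ t.2.1 ^ 2 ^ m = t.2.1 ∧ t.2.2 ^ 2 ^ m = t.2.2) ∧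
        t.1 + t.2.1 + t.2.2 = -A + 2 * B ∧ muRed f t.1 ^ 3 + muRed f t.2.1 ^ 3 + muRed f t.2.2 ^ 3 = muRed f A ^ 3 + muRed f B ^ 3 * d} = 3) ∧
    (d ≠ 0 → (cubicRoots f d = 0 ∨ cubicRoots f d = 1) →
      Nat.card {t : AdjoinRoot f × AdjoinRoot f × AdjoinRoot f //
        (t.1 ^ 2 ^ m = t.1 ∧ t.2.1 ^ 2 ^ m = t.2.1 ∧ t.2.2 ^ 2 ^ m = t.2.2) ∧
        t.1 + t.2.1 + t.2.2 = -A + 2 * B ∧ muRed f t.1 ^ 3 + muRed f t.2.1 ^ 3 + muRed f t.2.2 ^ 3 = muRed f A ^ 3 + muRed f B ^ 3 * d} = 0) ∧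
    (d ≠ 0 → cubicRoots f d = 3 →
      Nat.card {t : AdjoinRoot f × AdjoinRoot f × AdjoinRoot f //
        (t.1 ^ 2 ^ m = t.1 ∧ t.2.1 ^ 2 ^ m = t.2.1 ∧ t.2.2 ^ 2 ^ m = t.2.2) ∧
        t.1 + t.2.1 + t.2.2 = -A + 2 * B ∧ muRed f t.1 ^ 3 + muRed f t.2.1 ^ 3 + muRed f t.2.2 ^ 3 = muRed f A ^ 3 + muRed f B ^ 3 * d} = 6) := by
  let _ := (isField_resField hirr).toField
  have := finite_resField hmonic
  have h4 : (4 : AdjoinRoot f) = 0 := by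
    rw [← map_ofNat (algebraMap (ZMod 4) (AdjoinRoot f)) 4, show (4 : ZMod 4) = 0 from rfl,
      map_zero]
  have hker : RingHom.ker (muRed f) = Ideal.span {2} := Ideal.mk_ker
  have hK : ∀ x : ResField f, x ^ 2 ^ m = x := hdeg ▸ resField_pow_two_pow_natDegree hmonic hirr
  have h2 := two_eq_zero_of_ker_eq_span_two hker
  have hb : muRed f B ≠ 0 := fun h => hB0 <| by
    rw [← hB, pow_two_pow_eq_of_map_eq h4 hker hmpos (h.trans (map_zero _).symm),
      zero_pow (by positivity)]
  rw [card_teichmuller_solutions_eq h4 hker hmpos hK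
    (fun _ => muRed_eq_zero_of_two_mul_eq_zero hmonic) Ideal.Quotient.mk_surjective hA hb]
  refine ⟨?_, fun hd hN => card_isCubicRootTriple_eq_zero h2 hd ?_,
    fun hd hN => card_isCubicRootTriple_eq_six h2 hd hN⟩
  · rintro rfl
    exact card_isCubicRootTriple_zero h2
  · unfold cubicRoots at hN
    omega
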